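/- arXiv:2112.07377 — 2 statements merged into one kernel-verified Lean document; each statement's English description precedes it below -/
import Mathlib

section
/- Every instance of the NMVL_R table rule (from Γ → Δ,(φⱼ,kⱼ), j = 1,…,ℓ, infer Γ → Δ, {(∗(φ₁,…,φ_ℓ),k) : v_k ∈ ∗(v_{k₁},…,v_{k_ℓ})}) is derivable in NMVL_A by ℓ cuts with the corresponding table axiom. -/
/-- Formulas over a set `C` of connectives (applied to lists of arguments). -/
inductive Fm (C : Type) : Type
  | atom : ℕ → Fm C
  | app : C → List (Fm C) → Fm C

noncomputable instance {C : Type} : DecidableEq (Fm C) := Classical.decEq _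

/-- A sequent of finite sets of labelled formulas. -/
structure Sequent (C : Type) [DecidableEq C] (n : ℕ) where
  ant : Finset (Fm C × Fin n)
  suc : Finset (Fm C × Fin n)

variable {C : Type} [DecidableEq C] {n : ℕ}

/-- A valuation legal w.r.t. the non-deterministic tables `tbl`. -/
def IsVal (tbl : C → List (Fin n) → Finset (Fin n)) (v : Fm C → Fin n) : Prop :=
  ∀ c args, v (Fm.app c args) ∈ tbl c (args.map v)

/-- A valuation satisfies a sequent. -/
def Sat (v : Fm C → Fin n) (S : Sequent C n) : Prop :=
  (∀ p ∈ S.ant, v p.1 = p.2) → ∃ p ∈ S.suc, v p.1 = p.2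

/-- Semantic entailment. -/
def Entails (tbl : C → List (Fin n) → Finset (Fin n)) (H : Set (Sequent C n)) (S : Sequent C n) : Prop :=
  ∀ v : Fm C → Fin n, IsVal tbl v → (∀ T ∈ H, Sat v T) → Sat v S

/-- The family (∗(φ₁,…,φ_ℓ)×k)⁻¹ of antecedent sets. -/
def Theta (tbl : C → List (Fin n) → Finset (Fin n)) (c : C) (args : List (Fm C)) (k : Fin n) :
    Set (Finset (Fm C × Fin n)) :=
  { Θ | ∃ ks : List (Fin n), ks.length = args.length ∧ k ∈ tbl c ks ∧ Θ = (args.zip ks).toFinset }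

/-- Λ ∈ ⋁(∗(φ₁,…,φ_ℓ)×k)⁻¹ : a choice set hitting each Θ_q and contained in their union. -/
def Choice (tbl : C → List (Fin n) → Finset (Fin n)) (c : C) (args : List (Fm C)) (k : Fin n)
    (Λ : Finset (Fm C × Fin n)) : Prop :=
  (∀ Θ ∈ Theta tbl c args k, ∃ x ∈ Θ, x ∈ Λ) ∧
  (∀ x ∈ Λ, ∃ Θ ∈ Theta tbl c args k, x ∈ Θ)

/-- Which optional axioms/rules a calculus has. -/
structure Rules where
  tableAx : Bool      -- table axioms (2)
  tableRuleS : Bool   -- succedent table rules (10)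
  dualAx : Bool       -- distributively dual axioms (13)
  anteRule : Bool     -- antecedent introduction rules (17)
  multiShift : Bool   -- K-L-multi-shift (16)
  cut : Bool
  res : Bool

/-- Derivability from hypothesis sequents `H`; axioms (ψ,k)→(ψ,k), L-shift, R-shift and
weakenings are always present, the other axioms/rules are governed by `R`. -/
inductive Deriv (R : Rules) (tbl : C → List (Fin n) → Finset (Fin n)) (H : Set (Sequent C n)) :
    Sequent C n → Prop
  | hyp {S} : S ∈ H → Deriv R tbl H S
  | ax (ψ : Fm C) (k : Fin n) : Deriv R tbl H ⟨{(ψ, k)}, {(ψ, k)}⟩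
  | tableAx (c : C) (args : List (Fm C)) (ks : List (Fin n))
      (hlen : ks.length = args.length) (h : R.tableAx = true) :
      Deriv R tbl H ⟨(args.zip ks).toFinset, (tbl c ks).image (fun k => (Fm.app c args, k))⟩
  | lshift {Γ Δ} (φ : Fm C) (k : Fin n) :
      Deriv R tbl H ⟨insert (φ, k) Γ, Δ⟩ →
      Deriv R tbl H ⟨Γ, Δ ∪ ({k}ᶜ : Finset (Fin n)).image (fun k' => (φ, k'))⟩
  | rshift {Γ Δ} (φ : Fm C) {k' k'' : Fin n} (h : k' ≠ k'') :
      Deriv R tbl H ⟨Γ, insert (φ, k') Δ⟩ → Deriv R tbl H ⟨insert (φ, k'') Γ, Δ⟩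
  | lweak {Γ Δ} (φ : Fm C) (k : Fin n) :
      Deriv R tbl H ⟨Γ, Δ⟩ → Deriv R tbl H ⟨insert (φ, k) Γ, Δ⟩
  | rweak {Γ Δ} (φ : Fm C) (k : Fin n) :
      Deriv R tbl H ⟨Γ, Δ⟩ → Deriv R tbl H ⟨Γ, insert (φ, k) Δ⟩
  | cut {Γ Δ} (φ : Fm C) (k : Fin n) (h : R.cut = true) :
      Deriv R tbl H ⟨Γ, insert (φ, k) Δ⟩ → Deriv R tbl H ⟨insert (φ, k) Γ, Δ⟩ →
      Deriv R tbl H ⟨Γ, Δ⟩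
  | res {Γ Δ' Δ''} (φ : Fm C) {k' k'' : Fin n} (h : R.res = true) (hk : k' ≠ k'') :
      Deriv R tbl H ⟨Γ, insert (φ, k') Δ'⟩ → Deriv R tbl H ⟨Γ, insert (φ, k'') Δ''⟩ →
      Deriv R tbl H ⟨Γ, Δ' ∪ Δ''⟩
  | tableRuleS {Γ Δ} (c : C) (args : List (Fm C)) (ks : List (Fin n))
      (hlen : ks.length = args.length) (h : R.tableRuleS = true)
      (prem : ∀ p ∈ args.zip ks, Deriv R tbl H ⟨Γ, insert p Δ⟩) :
      Deriv R tbl H ⟨Γ, Δ ∪ (tbl c ks).image (fun k => (Fm.app c args, k))⟩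
  | dualAx (c : C) (args : List (Fm C)) (k : Fin n) (Λ : Finset (Fm C × Fin n))
      (h : R.dualAx = true) (hΛ : Choice tbl c args k Λ) :
      Deriv R tbl H ⟨{(Fm.app c args, k)}, Λ⟩
  | anteRule {Γ Δ} (c : C) (args : List (Fm C)) (k : Fin n) (h : R.anteRule = true)
      (prem : ∀ ks : List (Fin n), ks.length = args.length → k ∈ tbl c ks →
        Deriv R tbl H ⟨Γ ∪ (args.zip ks).toFinset, Δ⟩) :
      Deriv R tbl H ⟨insert (Fm.app c args, k) Γ, Δ⟩
  | multiShift {Γ Δ} (φ : Fm C) (K : Finset (Fin n)) (h : R.multiShift = true)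
      (hK : K ≠ Finset.univ)
      (prem : ∀ k ∈ K, Deriv R tbl H ⟨insert (φ, k) Γ, Δ⟩) :
      Deriv R tbl H ⟨Γ, Δ ∪ Kᶜ.image (fun k' => (φ, k'))⟩

/-- NMVL_A : table axioms, cut and resolution. -/
def NMVL_A : Rules := ⟨true, false, false, false, false, true, true⟩
/-- NMVL_A with cut but without resolution. -/
def NMVL_A_cut : Rules := ⟨true, false, false, false, false, true, false⟩
/-- NMVL_A with resolution but without cut. -/
def NMVL_A_res : Rules := ⟨true, false, false, false, false, false, true⟩
/-- NMVL_R : succedent table rules, cut and resolution. -/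
def NMVL_R : Rules := ⟨false, true, false, false, false, true, true⟩
/-- NMVL_R without cut and resolution. -/
def NMVL_R_cf : Rules := ⟨false, true, false, false, false, false, false⟩
/-- NMVL_A^dd : distributively dual axioms, cut and resolution. -/
def NMVL_Add : Rules := ⟨false, false, true, false, false, true, true⟩
/-- NMVL_R^sd : antecedent table rules, multi-shift, cut and resolution. -/
def NMVL_Rsd : Rules := ⟨false, false, false, true, true, true, true⟩

/-! Weaken the table axiom `(φ₁,k₁),…,(φ_ℓ,k_ℓ) → {(∗(φ₁,…,φ_ℓ),k) : v_k ∈ ∗(v_{k₁},…,v_{k_ℓ})}`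
to `Γ, (φ₁,k₁),…,(φ_ℓ,k_ℓ) → Δ, {…}` and remove the labelled arguments one at a time by cuts
against the (weakened) premises `Γ → Δ, (φⱼ,kⱼ)`. -/

namespace Deriv

variable {R : Rules} {tbl : C → List (Fin n) → Finset (Fin n)} {H : Set (Sequent C n)}
  {Γ Δ : Finset (Fm C × Fin n)}

theorem ant_union (h : Deriv R tbl H ⟨Γ, Δ⟩) (S : Finset (Fm C × Fin n)) :
    Deriv R tbl H ⟨Γ ∪ S, Δ⟩ := by
  induction S using Finset.induction with
  | empty => simpa using h
  | insert a S _ ih =>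
    rw [Finset.union_insert]
    exact lweak a.1 a.2 ih

theorem suc_union (h : Deriv R tbl H ⟨Γ, Δ⟩) (S : Finset (Fm C × Fin n)) :
    Deriv R tbl H ⟨Γ, Δ ∪ S⟩ := by
  induction S using Finset.induction with
  | empty => simpa using h
  | insert a S _ ih =>
    rw [Finset.union_insert]
    exact rweak a.1 a.2 ih

theorem mono {Γ' Δ' : Finset (Fm C × Fin n)} (h : Deriv R tbl H ⟨Γ, Δ⟩) (hΓ : Γ ⊆ Γ')
    (hΔ : Δ ⊆ Δ') : Deriv R tbl H ⟨Γ', Δ'⟩ := by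
  have h' := (h.ant_union Γ').suc_union Δ'
  rwa [Finset.union_eq_right.mpr hΓ, Finset.union_eq_right.mpr hΔ] at h'

theorem cut_finset (hcut : R.cut = true) {S : Finset (Fm C × Fin n)}
    (hS : ∀ p ∈ S, Deriv R tbl H ⟨Γ, insert p Δ⟩) (h : Deriv R tbl H ⟨Γ ∪ S, Δ⟩) :
    Deriv R tbl H ⟨Γ, Δ⟩ := by
  induction S using Finset.induction with
  | empty => simpa using h
  | insert a S _ ih =>
    have ha : Deriv R tbl H ⟨Γ ∪ S, insert a Δ⟩ :=
      (hS a (Finset.mem_insert_self a S)).mono Finset.subset_union_left subset_rfl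
    rw [Finset.union_insert] at h
    exact ih (fun p hp => hS p (Finset.mem_insert_of_mem hp)) (cut a.1 a.2 hcut ha h)

end Deriv

theorem stmt8_general (tbl : C → List (Fin n) → Finset (Fin n))
    (H : Set (Sequent C n))
    (Γ Δ : Finset (Fm C × Fin n)) (c : C) (args : List (Fm C)) (ks : List (Fin n))
    (hlen : ks.length = args.length)
    (prem : ∀ p ∈ args.zip ks, Deriv NMVL_A tbl H ⟨Γ, insert p Δ⟩) :
    Deriv NMVL_A tbl H ⟨Γ, Δ ∪ (tbl c ks).image (fun k => (Fm.app c args, k))⟩ := by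
  have weakened_prem : ∀ p ∈ (args.zip ks).toFinset, Deriv NMVL_A tbl H
      ⟨Γ, insert p (Δ ∪ (tbl c ks).image (fun k => (Fm.app c args, k)))⟩ := fun p hp =>
    (prem p (List.mem_toFinset.mp hp)).mono subset_rfl
      (Finset.insert_subset_insert p Finset.subset_union_left)
  refine Deriv.cut_finset rfl weakened_prem ?_
  exact (Deriv.tableAx c args ks hlen rfl).mono Finset.subset_union_right
    Finset.subset_union_right

/-- the table rules of NMVL_R are derivable in NMVL_A. -/
theorem stmt8 (hn : 2 ≤ n) (tbl : C → List (Fin n) → Finset (Fin n))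
    (htbl : ∀ c ks, (tbl c ks).Nonempty) (H : Set (Sequent C n))
    (Γ Δ : Finset (Fm C × Fin n)) (c : C) (args : List (Fm C)) (ks : List (Fin n))
    (hlen : ks.length = args.length)
    (prem : ∀ p ∈ args.zip ks, Deriv NMVL_A tbl H ⟨Γ, insert p Δ⟩) :
    Deriv NMVL_A tbl H ⟨Γ, Δ ∪ (tbl c ks).image (fun k => (Fm.app c args, k))⟩ :=
  stmt8_general tbl H Γ Δ c args ks hlen prem
end

section
/- For every connective ∗, every label k, and every choice set Λ = {(φ_{j₁},k_{j₁,1}),…,(φ_{j_s},k_{j_s,s})} ∈ ⋁(∗(φ₁,…,φ_ℓ)×k)⁻¹, the sequent (∗(φ₁,…,φ_ℓ),k) → Λ is derivable in NMVL_A. -/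
variable {C : Type} [DecidableEq C] {n : ℕ}

/-! Cutting each argument `φᵢ` on all `n` labels reduces the goal to one sequent
`(∗(φ₁,…,φ_ℓ), k), (φ₁, k₁), …, (φ_ℓ, k_ℓ) → Λ` per labelling `k₁, …, k_ℓ`. If
`v_k ∈ ∗(v_{k₁},…,v_{k_ℓ})`, the antecedent contains a member of `(∗(φ₁,…,φ_ℓ)×k)⁻¹`, which `Λ`
meets, so the sequent is an identity axiom up to weakening. Otherwise the table axiom for
`k₁, …, k_ℓ` has only labels `k' ≠ k` of `∗(φ₁,…,φ_ℓ)` in its succedent, and R-shift against the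
assumption `(∗(φ₁,…,φ_ℓ), k)` removes them all. -/

namespace Deriv

variable {R : Rules} {tbl : C → List (Fin n) → Finset (Fin n)} {H : Set (Sequent C n)}
  {Γ Δ : Finset (Fm C × Fin n)}

lemma weaken_ant (Γ₀ : Finset (Fm C × Fin n)) (h : Deriv R tbl H ⟨Γ, Δ⟩) :
    Deriv R tbl H ⟨Γ₀ ∪ Γ, Δ⟩ := by
  induction Γ₀ using Finset.induction with
  | empty => simpa using h
  | insert p Γ₀ _ ih => simpa only [Finset.insert_union] using lweak p.1 p.2 ih

lemma weaken_suc (Δ₀ : Finset (Fm C × Fin n)) (h : Deriv R tbl H ⟨Γ, Δ⟩) :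
    Deriv R tbl H ⟨Γ, Δ₀ ∪ Δ⟩ := by
  induction Δ₀ using Finset.induction with
  | empty => simpa using h
  | insert p Δ₀ _ ih => simpa only [Finset.insert_union] using rweak p.1 p.2 ih

lemma weaken {Γ' Δ' : Finset (Fm C × Fin n)} (hΓ : Γ ⊆ Γ') (hΔ : Δ ⊆ Δ')
    (h : Deriv R tbl H ⟨Γ, Δ⟩) : Deriv R tbl H ⟨Γ', Δ'⟩ := by
  simpa only [Finset.union_eq_left.mpr hΓ, Finset.union_eq_left.mpr hΔ] using
    (h.weaken_suc Δ').weaken_ant Γ'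

lemma of_mem_ant_of_mem_suc {p : Fm C × Fin n} (hΓ : p ∈ Γ) (hΔ : p ∈ Δ) :
    Deriv R tbl H ⟨Γ, Δ⟩ :=
  (ax p.1 p.2).weaken (Finset.singleton_subset_iff.mpr hΓ) (Finset.singleton_subset_iff.mpr hΔ)

lemma rshift_image {φ : Fm C} {k : Fin n} {K : Finset (Fin n)} (hk : k ∉ K)
    (h : Deriv R tbl H ⟨insert (φ, k) Γ, K.image (φ, ·) ∪ Δ⟩) :
    Deriv R tbl H ⟨insert (φ, k) Γ, Δ⟩ := by
  induction K using Finset.induction with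
  | empty => simpa using h
  | insert k' K _ ih =>
    have hne : k' ≠ k := fun e => hk (e ▸ Finset.mem_insert_self k' K)
    refine ih (fun hkK => hk (Finset.mem_insert_of_mem hkK)) ?_
    rw [Finset.image_insert, Finset.insert_union] at h
    simpa only [Finset.insert_idem] using rshift φ hne h

lemma cut_all_labels [NeZero n] (hcut : R.cut = true) (φ : Fm C)
    (prem : ∀ k : Fin n, Deriv R tbl H ⟨insert (φ, k) Γ, Δ⟩) : Deriv R tbl H ⟨Γ, Δ⟩ := by
  -- L-shift on the premise for label `0` puts all other labels of `φ` into the succedent;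
  -- the premises for those labels cut them away one at a time.
  suffices ∀ K : Finset (Fin n), Deriv R tbl H ⟨Γ, K.image (φ, ·) ∪ Δ⟩ → Deriv R tbl H ⟨Γ, Δ⟩ by
    refine this {0}ᶜ ?_
    rw [Finset.union_comm]
    exact lshift φ 0 (prem 0)
  intro K
  induction K using Finset.induction with
  | empty => simp
  | insert k K _ ih =>
    intro h
    rw [Finset.image_insert, Finset.insert_union] at h
    exact ih (cut φ k hcut h ((prem k).weaken subset_rfl Finset.subset_union_right))

lemma of_forall_labelings [NeZero n] (hcut : R.cut = true) (φs : List (Fm C))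
    (prem : ∀ ks : List (Fin n), ks.length = φs.length →
      Deriv R tbl H ⟨Γ ∪ (φs.zip ks).toFinset, Δ⟩) :
    Deriv R tbl H ⟨Γ, Δ⟩ := by
  induction φs generalizing Γ with
  | nil => simpa using prem [] rfl
  | cons φ φs ih =>
    refine cut_all_labels hcut φ fun k => ih fun ks hks => ?_
    simpa only [Finset.insert_union, List.zip_cons_cons, List.toFinset_cons, Finset.union_insert]
      using prem (k :: ks) (by simp [hks])

lemma app_of_labeling (htab : R.tableAx = true) {c : C} {args : List (Fm C)} {k : Fin n}
    {Λ : Finset (Fm C × Fin n)} (hΛ : ∀ Θ ∈ Theta tbl c args k, ∃ x ∈ Θ, x ∈ Λ)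
    {ks : List (Fin n)} (hks : ks.length = args.length) :
    Deriv R tbl H ⟨insert (Fm.app c args, k) (args.zip ks).toFinset, Λ⟩ := by
  by_cases hk : k ∈ tbl c ks
  · obtain ⟨p, hpΘ, hpΛ⟩ := hΛ _ ⟨ks, hks, hk, rfl⟩
    exact of_mem_ant_of_mem_suc (Finset.mem_insert_of_mem hpΘ) hpΛ
  · refine rshift_image hk ((tableAx c args ks hks htab).weaken ?_ ?_) <;> simp

end Deriv

theorem stmt12_general (tbl : C → List (Fin n) → Finset (Fin n))
    (H : Set (Sequent C n))
    (c : C) (args : List (Fm C)) (k : Fin n) (Λ : Finset (Fm C × Fin n))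
    (hΛ : Choice tbl c args k Λ) :
    Deriv NMVL_A tbl H ⟨{(Fm.app c args, k)}, Λ⟩ := by
  have : NeZero n := NeZero.of_pos k.pos
  refine Deriv.of_forall_labelings rfl args fun ks hks => ?_
  rw [← Finset.insert_eq]
  exact Deriv.app_of_labeling rfl hΛ.1 hks

/-- for each choice set Λ ∈ ⋁(∗(φ₁,…,φ_ℓ)×k)⁻¹ the sequent
(∗(φ₁,…,φ_ℓ),k) → Λ is derivable in NMVL_A. -/
theorem stmt12 (hn : 2 ≤ n) (tbl : C → List (Fin n) → Finset (Fin n))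
    (htbl : ∀ c ks, (tbl c ks).Nonempty) (H : Set (Sequent C n))
    (c : C) (args : List (Fm C)) (k : Fin n) (Λ : Finset (Fm C × Fin n))
    (hΛ : Choice tbl c args k Λ) :
    Deriv NMVL_A tbl H ⟨{(Fm.app c args, k)}, Λ⟩ :=
  stmt12_general tbl H c args k Λ hΛ
end
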